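/- Suppose there exist Δ > 0 and δ_n ≥ 0 with δ_n → 0 such that: for all x, y_1 ∈ Ω_{2c/3} with (t_{1,1}(x,y_1),...,t_{k,k}(x,y_1)) ∈ B_ε, t_{i,i}(x,y_1) = max_j t_{j,i}(x,y_1) for all i ∈ [k], and y_1 ∉ C(x), and for y_2 obtained from y_1 by changing its value at one vertex i with y_1(i) = a ≠ b = x(i) to y_2(i) = b, one has L_Φ(x,y_1) − L_Φ(x,y_2) ≥ Δ(1−δ_n). Then for all x, y_m, y_h ∈ Ω satisfying: D_Ω(y_m,y_h) = j with j ≥ 2, there exist u_1,...,u_j ∈ [n] with y_m(v) = y_h(v) for all v ∈ [n]\{u_1,...,u_j}, y_m(u_i) ≠ y_h(u_i) = x(u_i) = y_m(u_{i−1}) for all i ∈ [j], and (t_{1,1}(x,y_m),...,t_{k,k}(x,y_m)) ∈ B_ε with the associated bijection w equal to the identity (and each intermediate assignment in the chain satisfying the hypotheses above), one has L_Φ(x,y_m) − L_Φ(x,y_h) ≥ jΔ(1−δ_n). -/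

import Mathlib

/-! Vertex `u_m` is untouched by the first `m` links of the chain, so there the `m`-th assignment
still carries `y_m(u_m) ≠ y_h(u_m) = x(u_m)`. Hence every link is a single-vertex move towards `x`
from an assignment satisfying the single-step hypotheses, each gains at least `Δ(1 − δ_n)`, and
the `j` gains telescope. -/

open Finset MeasureTheory ProbabilityTheory

/-- The `p × n` matrix `A_x` with entries `(A_x)_{i,j} = θ(x, i, x(j))`. -/
def matA {n k p : ℕ} (θ : (Fin n → Fin k) → Fin p → Fin k → ℝ)
    (x : Fin n → Fin k) : Fin p → Fin n → ℝ :=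
  fun i j => θ x i (x j)

/-- Inner product of two `p × n` matrices. -/
def mInner {n p : ℕ} (P Q : Fin p → Fin n → ℝ) : ℝ :=
  ∑ i, ∑ j, P i j * Q i j

/-- Hadamard (entrywise) product. -/
def hadamard {n p : ℕ} (P Q : Fin p → Fin n → ℝ) : Fin p → Fin n → ℝ :=
  fun i j => P i j * Q i j

/-- The matrix `Φ` of reciprocals of the entries of `Σ`. -/
noncomputable def PhiMat {n p : ℕ} (σ : Fin p → Fin n → ℝ) : Fin p → Fin n → ℝ :=
  fun i j => 1 / σ i j

/-- `L_Φ(x,y) = ‖Φ*(A_x − A_y)‖²`. -/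
noncomputable def LPhi {n k p : ℕ} (θ : (Fin n → Fin k) → Fin p → Fin k → ℝ)
    (σ : Fin p → Fin n → ℝ) (x y : Fin n → Fin k) : ℝ :=
  mInner (hadamard (PhiMat σ) (fun i j => matA θ x i j - matA θ y i j))
    (hadamard (PhiMat σ) (fun i j => matA θ x i j - matA θ y i j))

/-- `x' ∈ C(x)`: `x'` is equivalent to `x`. -/
def equivC {n k p : ℕ} (θ : (Fin n → Fin k) → Fin p → Fin k → ℝ)
    (x x' : Fin n → Fin k) : Prop :=
  (∀ i j : Fin n, x i = x j ↔ x' i = x' j) ∧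
    ∀ (i : Fin p) (j : Fin n), θ x i (x j) = θ x' i (x' j)

/-- `t_{i,j}(x,z) = |x⁻¹(i) ∩ z⁻¹(j)|`. -/
def tcount {n k : ℕ} (x z : Fin n → Fin k) (i j : Fin k) : ℕ :=
  (Finset.univ.filter fun v => x v = i ∧ z v = j).card

/-- `Ω_c`: assignments in which each community has at least `c·n` vertices. -/
def OmegaC {n k : ℕ} (c : ℝ) : Set (Fin n → Fin k) :=
  {x | ∀ i : Fin k, c * n ≤ ((Finset.univ.filter fun v => x v = i).card : ℝ)}

/-- `(t_{1,1}(x,y),…,t_{k,k}(x,y)) ∈ B_ε`: some selection `w` of columnwise maximizers of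
`t_{·,i}(x,y)` is a bijection, is `θ`-preserving, and the maxima satisfy
`t_{w(i),i} ≥ n_i(y) − nε`. -/
def inBeps {n k p : ℕ} (θ : (Fin n → Fin k) → Fin p → Fin k → ℝ)
    (ε : ℝ) (x y : Fin n → Fin k) : Prop :=
  ∃ w : Fin k → Fin k, Function.Bijective w ∧
    (∀ i j : Fin k, tcount x y j i ≤ tcount x y (w i) i) ∧
    (∀ i : Fin k, ((Finset.univ.filter fun v => y v = i).card : ℝ) - n * ε ≤
      (tcount x y (w i) i : ℝ)) ∧
    (∀ (z : Fin n → Fin k) (i : Fin p) (a : Fin k), θ z i a = θ (w ∘ z) i (w a))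

/-- `(t_{1,1}(x,y),…,t_{k,k}(x,y)) ∈ B_ε` with the diagonal realizing the columnwise maxima
(`w = id`, which is trivially a `θ`-preserving bijection). -/
def diagBeps {n k : ℕ} (ε : ℝ) (x y : Fin n → Fin k) : Prop :=
  (∀ i j : Fin k, tcount x y j i ≤ tcount x y i i) ∧
    ∀ i : Fin k, ((Finset.univ.filter fun v => y v = i).card : ℝ) - n * ε ≤
      (tcount x y i i : ℝ)

/-- `D_Ω(x,z) = Σ_{i≠j} t_{i,j}(x,z)`. -/
def DOmega {n k : ℕ} (x z : Fin n → Fin k) : ℕ :=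
  ∑ i : Fin k, ∑ j : Fin k, if i ≠ j then tcount x z i j else 0

/-- The chain `z_0 = y_m`, `z_{i+1} = z_i` updated at `u_i` to the value `x(u_i)`. -/
def chainAssign {n k : ℕ} (x ym : Fin n → Fin k) {j : ℕ} (u : Fin j → Fin n) :
    ℕ → (Fin n → Fin k)
  | 0 => ym
  | (i + 1) =>
    if h : i < j then
      Function.update (chainAssign x ym u i) (u ⟨i, h⟩) (x (u ⟨i, h⟩))
    else chainAssign x ym u i

lemma nsmul_le_sub_of_le_sub_succ {α : Type*} [AddCommGroup α] [PartialOrder α]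
    [IsOrderedAddMonoid α] {f : ℕ → α} {d : α} {j : ℕ}
    (h : ∀ m < j, d ≤ f m - f (m + 1)) : j • d ≤ f 0 - f j := by
  induction j with
  | zero => simp
  | succ j ih =>
    calc (j + 1) • d = j • d + d := succ_nsmul d j
      _ ≤ (f 0 - f j) + (f j - f (j + 1)) :=
          add_le_add (ih fun m hm => h m (by omega)) (h j (by omega))
      _ = f 0 - f (j + 1) := by abel

section chainAssign

variable {n k : ℕ} (x ym : Fin n → Fin k) {j : ℕ} (u : Fin j → Fin n)

lemma chainAssign_succ_of_lt {m : ℕ} (hm : m < j) :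
    chainAssign x ym u (m + 1) =
      Function.update (chainAssign x ym u m) (u ⟨m, hm⟩) (x (u ⟨m, hm⟩)) :=
  dif_pos hm

lemma chainAssign_succ_of_le {m : ℕ} (hm : j ≤ m) :
    chainAssign x ym u (m + 1) = chainAssign x ym u m :=
  dif_neg (by omega)

lemma chainAssign_apply_of_forall_ne {m : ℕ} {v : Fin n}
    (hv : ∀ i : Fin j, (i : ℕ) < m → v ≠ u i) : chainAssign x ym u m v = ym v := by
  induction m with
  | zero => rfl
  | succ m ih =>
    have hv' : ∀ i : Fin j, (i : ℕ) < m → v ≠ u i := fun i hi => hv i (by omega)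
    by_cases hm : m < j
    · rw [chainAssign_succ_of_lt x ym u hm, Function.update_of_ne (hv ⟨m, hm⟩ (by simp))]
      exact ih hv'
    · rw [chainAssign_succ_of_le x ym u (by omega)]
      exact ih hv'

lemma chainAssign_apply_of_injective (hu : Function.Injective u) {m : ℕ} (hm : m < j) :
    chainAssign x ym u m (u ⟨m, hm⟩) = ym (u ⟨m, hm⟩) :=
  chainAssign_apply_of_forall_ne x ym u fun i hi heq => by
    have : m = i := congrArg Fin.val (hu heq)
    omega

end chainAssign

/-- the single-vertex improvement assumption (Assumption 2.2, with improvement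
`Δ(1−δ_n)`, `δ_n → 0`) implies the chain improvement assumption (Assumption 4.6):
`L_Φ(x,y_m) − L_Φ(x,y_h) ≥ jΔ(1−δ_n)` along a chain of `j` single-vertex changes whose
intermediate assignments satisfy the hypotheses of the single-step assumption. -/
theorem stmt19
    (k p : ℕ → ℕ)
    (θ : (n : ℕ) → (Fin n → Fin (k n)) → Fin (p n) → Fin (k n) → ℝ)
    (σ : (n : ℕ) → Fin (p n) → Fin n → ℝ)
    (c : ℝ) (ε : ℕ → ℝ) (Δ : ℕ → ℝ) (δ : ℕ → ℝ)
    -- the single-vertex improvement assumption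
    (hstep : ∀ n (x y₁ : Fin n → Fin (k n)),
      x ∈ OmegaC (2 * c / 3) → y₁ ∈ OmegaC (2 * c / 3) →
      diagBeps (ε n) x y₁ → ¬ equivC (θ n) x y₁ →
      ∀ v : Fin n, y₁ v ≠ x v →
        Δ n * (1 - δ n) ≤
          LPhi (θ n) (σ n) x y₁ - LPhi (θ n) (σ n) x (Function.update y₁ v (x v))) :
    -- the chain improvement conclusion
    ∀ n (x ym yh : Fin n → Fin (k n)) (j : ℕ) (hj : 2 ≤ j), DOmega ym yh = j →
      ∀ u : Fin j → Fin n, Function.Injective u →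
        (∀ v : Fin n, (∀ i : Fin j, v ≠ u i) → ym v = yh v) →
        (∀ i : Fin j, ym (u i) ≠ yh (u i) ∧ yh (u i) = x (u i) ∧
          x (u i) = ym (u ⟨(i.1 + j - 1) % j, Nat.mod_lt _ (by omega : 0 < j)⟩)) →
        chainAssign x ym u j = yh →
        x ∈ OmegaC (2 * c / 3) →
        (∀ i : ℕ, i < j →
          chainAssign x ym u i ∈ OmegaC (2 * c / 3) ∧
            diagBeps (ε n) x (chainAssign x ym u i) ∧
            ¬ equivC (θ n) x (chainAssign x ym u i)) →
        (j : ℝ) * (Δ n * (1 - δ n)) ≤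
          LPhi (θ n) (σ n) x ym - LPhi (θ n) (σ n) x yh := by
  intro n x ym yh j _ _ u hu _ hflip hchain hx hhyp
  have hdescent : ∀ m < j, Δ n * (1 - δ n) ≤
      LPhi (θ n) (σ n) x (chainAssign x ym u m) -
        LPhi (θ n) (σ n) x (chainAssign x ym u (m + 1)) := by
    intro m hm
    obtain ⟨hΩ, hB, hC⟩ := hhyp m hm
    obtain ⟨hym, hyh, -⟩ := hflip ⟨m, hm⟩
    have hne : chainAssign x ym u m (u ⟨m, hm⟩) ≠ x (u ⟨m, hm⟩) := by
      rw [chainAssign_apply_of_injective x ym u hu hm, ← hyh]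
      exact hym
    rw [chainAssign_succ_of_lt x ym u hm]
    exact hstep n x _ hx hΩ hB hC _ hne
  have := nsmul_le_sub_of_le_sub_succ hdescent
  rwa [nsmul_eq_mul, hchain] at this
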